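/- Let β < q₀ < q < 1 − β with q₀m, qm and βm integers. Suppose A x* = b_t, b = b_t + ξ with ‖ξ‖₀ ≤ βm, and x_k ∈ ℝⁿ satisfies ⟨x_k, a_j⟩ = b_j for some j ∈ {1,…,m}. Let B be a set of exactly (q − q₀)m indices with Q₀ ≤ |r_j| ≤ Q for all j ∈ B (obtained by removing from the qm indices at or below the q-quantile a set of q₀m indices at or below the q₀-quantile), and set S := B ∩ supp(ξ). Then (1/|B\S|) Σ_{i∈B\S} ‖(x_k + r_i a_i) − x*‖² ≤ (1 − σ_{q−β,min}(A)²/(qm) − σ_{q₀−β,min}(A)²/(q₀ q m²))·‖x_k − x*‖². -/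

import Mathlib

open Finset

/-- Largest singular value of `A`, as the operator norm of the associated
Euclidean linear map. -/
noncomputable def sigmaMax {m n : ℕ} (A : Matrix (Fin m) (Fin n) ℝ) : ℝ :=
  ‖LinearMap.toContinuousLinearMap (Matrix.toEuclideanLin A)‖

/-- `sigmaSMin A k` is the minimum over all index sets `I` of cardinality `k`
of the smallest value of `‖A_I x‖` over unit vectors `x`. -/
noncomputable def sigmaSMin {m n : ℕ} (A : Matrix (Fin m) (Fin n) ℝ) (k : ℕ) : ℝ :=
  sInf {t : ℝ | ∃ I : Finset (Fin m), I.card = k ∧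
    t = sInf {u : ℝ | ∃ x : EuclideanSpace ℝ (Fin n), ‖x‖ = 1 ∧
      u = Real.sqrt (∑ i ∈ I, (A.mulVec (fun k => x k) i) ^ 2)}}

/-- The `j`-th row of `A`, as a vector in Euclidean space. -/
noncomputable def row {m n : ℕ} (A : Matrix (Fin m) (Fin n) ℝ) (j : Fin m) :
    EuclideanSpace ℝ (Fin n) := WithLp.toLp 2 (fun k => A j k)

/-- Residual `r_j = b_j - ⟨x, a_j⟩`. -/
noncomputable def resid {m n : ℕ} (A : Matrix (Fin m) (Fin n) ℝ) (b : Fin m → ℝ)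
    (x : EuclideanSpace ℝ (Fin n)) (j : Fin m) : ℝ :=
  b j - ∑ k, x k * A j k

/-- `IsQuantile f k Q` says `Q` is the `k`-th smallest value (1-indexed,
counted with multiplicity) of the multiset `{f j}`. -/
def IsQuantile {m : ℕ} (f : Fin m → ℝ) (k : ℕ) (Q : ℝ) : Prop :=
  k ≤ (Finset.univ.filter fun j => f j ≤ Q).card ∧
  (Finset.univ.filter fun j => f j < Q).card < k

/-!
For an uncorrupted row `i` the residual is `rᵢ = ⟪aᵢ, x* - x⟫`, so projecting onto the
`i`-th hyperplane lowers the squared error by exactly `rᵢ²`; the left side is therefore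
`‖x - x*‖²` minus the mean of `rᵢ²` over `G = B \ S`. Any `kq - kβ` uncorrupted rows carry
residual energy at least `σ_{q-β}² ‖x - x*‖²`, and the uncorrupted rows of `B₀` give
`σ_{q₀-β}² ‖x - x*‖² ≤ kq₀ Q₀²`. Rows of `G` have `rᵢ² ≥ Q₀²` and rows of `B₀` have
`rᵢ² ≤ Q₀²`, so counting yields `|G| (σ_{q-β}² ‖x - x*‖² + Q₀²) ≤ kq ∑_G rᵢ²`. The extra
`Q₀²` is paid for by the row `j₀` with zero residual: it lies in `B₀` (one row of `B₀`
contributes nothing), or in `B` (then `Q₀ = 0`), or outside `Bq`, where it can replace a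
row of `G` in the `σ_{q-β}` bound.
-/

section TrimmedBlock

variable {ι : Type*} {r : ι → ℝ}

theorem sum_sq_le_card_mul_sq {s : Finset ι} {c : ℝ} (h : ∀ i ∈ s, |r i| ≤ c) :
    ∑ i ∈ s, r i ^ 2 ≤ s.card * c ^ 2 := by
  simpa using sum_le_card_nsmul s (fun i => r i ^ 2) _
    fun i hi => sq_le_sq.2 ((h i hi).trans (le_abs_self c))

theorem card_mul_sq_le_sum_sq {s : Finset ι} {c : ℝ} (hc : 0 ≤ c) (h : ∀ i ∈ s, c ≤ |r i|) :
    s.card * c ^ 2 ≤ ∑ i ∈ s, r i ^ 2 := by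
  simpa using card_nsmul_le_sum s (fun i => r i ^ 2) _
    fun i hi => sq_le_sq.2 ((abs_of_nonneg hc).trans_le (h i hi))

variable [DecidableEq ι]

theorem sum_sq_sdiff_le_sum_sq_add (E Bq B₀ : Finset ι) :
    ∑ i ∈ Bq \ E, r i ^ 2 ≤ ∑ i ∈ (Bq \ B₀) \ E, r i ^ 2 + ∑ i ∈ B₀, r i ^ 2 := by
  calc ∑ i ∈ Bq \ E, r i ^ 2 ≤ ∑ i ∈ (Bq \ B₀) \ E ∪ B₀, r i ^ 2 :=
        sum_le_sum_of_subset_of_nonneg (fun i => by simp only [mem_sdiff, mem_union]; tauto)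
          fun i _ _ => sq_nonneg _
    _ = _ := sum_union (sdiff_disjoint.mono_left sdiff_subset)

variable {E Bq B₀ : Finset ι} {kq kβ : ℕ} {Q₀ σ : ℝ}

theorem le_sum_sq_sdiff_of_le_card (hE : E.card ≤ kβ)
    (hσ : ∀ V : Finset ι, Disjoint V E → kq - kβ ≤ V.card → σ ≤ ∑ i ∈ V, r i ^ 2)
    {X : Finset ι} (hX : kq ≤ X.card) : σ ≤ ∑ i ∈ X \ E, r i ^ 2 :=
  hσ _ sdiff_disjoint (by have := le_card_sdiff E X; omega)

theorem add_sq_le_sum_sq_add_card_mul_sq (hE : E.card ≤ kβ)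
    (hσ : ∀ V : Finset ι, Disjoint V E → kq - kβ ≤ V.card → σ ≤ ∑ i ∈ V, r i ^ 2)
    (hBq : kq ≤ Bq.card) (hlo : ∀ i ∈ B₀, |r i| ≤ Q₀) (hhi : ∀ i ∈ Bq \ B₀, Q₀ ≤ |r i|)
    (hQ₀ : 0 ≤ Q₀) {j₀ : ι} (hj₀ : r j₀ = 0) (hG : ((Bq \ B₀) \ E).Nonempty) :
    σ + Q₀ ^ 2 ≤ ∑ i ∈ (Bq \ B₀) \ E, r i ^ 2 + B₀.card * Q₀ ^ 2 := by
  have hσBq : σ ≤ ∑ i ∈ (Bq \ B₀) \ E, r i ^ 2 + ∑ i ∈ B₀, r i ^ 2 :=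
    (le_sum_sq_sdiff_of_le_card hE hσ hBq).trans (sum_sq_sdiff_le_sum_sq_add E Bq B₀)
  have hj₀sq : r j₀ ^ 2 = 0 := by simp [hj₀]
  by_cases hjB₀ : j₀ ∈ B₀
  · have hcard : ((B₀.erase j₀).card : ℝ) = B₀.card - 1 := by
      rw [card_erase_of_mem hjB₀, Nat.cast_sub (card_pos.2 ⟨j₀, hjB₀⟩), Nat.cast_one]
    have := sum_sq_le_card_mul_sq (s := B₀.erase j₀) fun i hi => hlo i (mem_of_mem_erase hi)
    rw [sum_erase B₀ hj₀sq, hcard] at this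
    linarith
  by_cases hjBq : j₀ ∈ Bq
  · obtain rfl : Q₀ = 0 :=
      le_antisymm (by simpa [hj₀] using hhi j₀ (mem_sdiff.2 ⟨hjBq, hjB₀⟩)) hQ₀
    have := sum_sq_le_card_mul_sq hlo
    simp only [ne_eq, OfNat.ofNat_ne_zero, not_false_eq_true, zero_pow, mul_zero,
      add_zero] at this ⊢
    linarith
  -- Swapping a row `i` of `G` for `j₀` keeps `kq` rows and removes the energy `rᵢ² ≥ Q₀²`.
  obtain ⟨i, hiG⟩ := hG
  have hiBq : i ∈ Bq := (mem_sdiff.1 (mem_sdiff.1 hiG).1).1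
  have hjX : j₀ ∉ Bq.erase i := fun h => hjBq (mem_of_mem_erase h)
  have hX : kq ≤ (insert j₀ (Bq.erase i)).card := by
    rw [card_insert_of_notMem hjX, card_erase_of_mem hiBq]; omega
  have hswap : ∑ k ∈ insert j₀ (Bq.erase i) \ E, r k ^ 2 ≤ ∑ k ∈ Bq \ E, r k ^ 2 - r i ^ 2 :=
    calc ∑ k ∈ insert j₀ (Bq.erase i) \ E, r k ^ 2
        ≤ ∑ k ∈ insert j₀ ((Bq \ E).erase i), r k ^ 2 :=
          sum_le_sum_of_subset_of_nonneg (by rw [← erase_sdiff_comm]; grind)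
            fun _ _ _ => sq_nonneg _
      _ = ∑ k ∈ Bq \ E, r k ^ 2 - r i ^ 2 := by
          rw [sum_insert_zero (f := fun k => r k ^ 2) hj₀sq,
            sum_erase_eq_sub (mem_sdiff.2 ⟨hiBq, (mem_sdiff.1 hiG).2⟩)]
  have hri : Q₀ ^ 2 ≤ r i ^ 2 :=
    sq_le_sq.2 ((abs_of_nonneg hQ₀).trans_le (hhi i (mem_sdiff.1 hiG).1))
  linarith [le_sum_sq_sdiff_of_le_card hE hσ hX, sum_sq_sdiff_le_sum_sq_add (r := r) E Bq B₀,
    sum_sq_le_card_mul_sq hlo]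

theorem card_mul_add_sq_le_mul_sum_sq (hE : E.card ≤ kβ)
    (hσ : ∀ V : Finset ι, Disjoint V E → kq - kβ ≤ V.card → σ ≤ ∑ i ∈ V, r i ^ 2)
    (hB₀ : B₀ ⊆ Bq) (hBq : Bq.card = kq) (hlo : ∀ i ∈ B₀, |r i| ≤ Q₀)
    (hhi : ∀ i ∈ Bq \ B₀, Q₀ ≤ |r i|) (hQ₀ : 0 ≤ Q₀) {j₀ : ι} (hj₀ : r j₀ = 0)
    (hG : ((Bq \ B₀) \ E).Nonempty) :
    ((Bq \ B₀) \ E).card * (σ + Q₀ ^ 2) ≤ kq * ∑ i ∈ (Bq \ B₀) \ E, r i ^ 2 := by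
  set G := (Bq \ B₀) \ E
  have hbound := add_sq_le_sum_sq_add_card_mul_sq hE hσ hBq.ge hlo hhi hQ₀ hj₀ hG
  have hlower := card_mul_sq_le_sum_sq (s := G) hQ₀ fun i hi => hhi i (mem_sdiff.1 hi).1
  have hcard : (G.card : ℝ) + B₀.card ≤ kq := by
    have : G.card + B₀.card ≤ kq := by
      rw [← hBq, ← card_sdiff_add_card_eq_card hB₀]
      exact Nat.add_le_add_right (card_le_card sdiff_subset) _
    exact_mod_cast this
  have hC : (0 : ℝ) ≤ G.card := Nat.cast_nonneg _
  nlinarith [mul_le_mul_of_nonneg_left hbound hC,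
    mul_le_mul_of_nonneg_left hlower (show (0 : ℝ) ≤ kq - G.card by linarith),
    mul_nonneg (show (0 : ℝ) ≤ kq - G.card - B₀.card by linarith) (mul_nonneg hC (sq_nonneg Q₀))]

end TrimmedBlock

open scoped Matrix

theorem norm_add_inner_smul_sub_sq {F : Type*} [NormedAddCommGroup F] [InnerProductSpace ℝ F]
    {a : F} (ha : ‖a‖ = 1) (x y : F) :
    ‖x + inner ℝ a (y - x) • a - y‖ ^ 2 = ‖x - y‖ ^ 2 - inner ℝ a (y - x) ^ 2 := by
  rw [show x + inner ℝ a (y - x) • a - y = inner ℝ a (y - x) • a - (y - x) by abel,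
    norm_sub_sq_real, real_inner_smul_left, norm_smul, ha, norm_sub_rev x y, Real.norm_eq_abs,
    mul_one, sq_abs]
  ring

theorem inv_mul_sub_le_of_mul_add_sq_le {C K K₀ D T a b Q : ℝ} (hC : 0 < C) (hK : 0 < K)
    (hK₀ : 0 < K₀) (hkey : C * (a * D + Q ^ 2) ≤ K * T) (hb : b * D ≤ K₀ * Q ^ 2) :
    C⁻¹ * (C * D - T) ≤ (1 - a / K - b / (K₀ * K)) * D := by
  have h : C * (a * D) * K₀ + C * (b * D) ≤ T * (K₀ * K) := by
    nlinarith [mul_le_mul_of_nonneg_left hkey hK₀.le, mul_le_mul_of_nonneg_left hb hC.le]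
  rw [inv_mul_le_iff₀ hC]
  calc C * D - T ≤ C * D - (C * (a * D) * K₀ + C * (b * D)) / (K₀ * K) := by
        rw [sub_le_sub_iff_left, div_le_iff₀ (by positivity)]
        exact h
    _ = C * ((1 - a / K - b / (K₀ * K)) * D) := by field_simp; ring

section Rows

variable {m n : ℕ} (A : Matrix (Fin m) (Fin n) ℝ)

theorem norm_row_sq (j : Fin m) : ‖row A j‖ ^ 2 = ∑ k, A j k ^ 2 := by
  simp [EuclideanSpace.real_norm_sq_eq, row]

theorem norm_row_eq_one (hrow : ∀ j, ∑ k, A j k ^ 2 = 1) (j : Fin m) : ‖row A j‖ = 1 := by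
  rw [← pow_eq_one_iff_of_nonneg (norm_nonneg _) two_ne_zero, norm_row_sq, hrow]

theorem inner_row (j : Fin m) (x : EuclideanSpace ℝ (Fin n)) :
    inner ℝ (row A j) x = (A *ᵥ ⇑x) j := by
  simp [row, PiLp.inner_apply, Matrix.mulVec, dotProduct, mul_comm]

theorem resid_mulVec_add (xstar x : EuclideanSpace ℝ (Fin n)) (ξ : Fin m → ℝ) (i : Fin m) :
    resid A (A *ᵥ ⇑xstar + ξ) x i = inner ℝ (row A i) (xstar - x) + ξ i := by
  simp [resid, inner_row, Matrix.mulVec, dotProduct, mul_sub, sum_sub_distrib, mul_comm]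
  ring

theorem norm_add_resid_smul_row_sub_sq (hrow : ∀ j, ∑ k, A j k ^ 2 = 1)
    (xstar x : EuclideanSpace ℝ (Fin n)) {ξ : Fin m → ℝ} {i : Fin m} (hi : ξ i = 0) :
    ‖x + resid A (A *ᵥ ⇑xstar + ξ) x i • row A i - xstar‖ ^ 2 =
      ‖x - xstar‖ ^ 2 - resid A (A *ᵥ ⇑xstar + ξ) x i ^ 2 := by
  rw [resid_mulVec_add, hi, add_zero, norm_add_inner_smul_sub_sq (norm_row_eq_one A hrow i)]

theorem sigmaSMin_nonneg (k : ℕ) : 0 ≤ sigmaSMin A k :=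
  Real.sInf_nonneg fun _ ⟨_, _, ht⟩ =>
    ht ▸ Real.sInf_nonneg fun _ ⟨_, _, hu⟩ => hu ▸ Real.sqrt_nonneg _

theorem sigmaSMin_le_sqrt_sum_sq (I : Finset (Fin m)) {x : EuclideanSpace ℝ (Fin n)}
    (hx : ‖x‖ = 1) : sigmaSMin A I.card ≤ √(∑ i ∈ I, (A *ᵥ ⇑x) i ^ 2) := by
  unfold sigmaSMin
  refine (csInf_le ⟨0, ?_⟩ (Set.mem_ofPred.2 ⟨I, rfl, rfl⟩)).trans
    (csInf_le ⟨0, ?_⟩ (Set.mem_ofPred.2 ⟨x, hx, rfl⟩))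
  · rintro _ ⟨_, _, rfl⟩
    exact Real.sInf_nonneg fun _ ⟨_, _, hu⟩ => hu ▸ Real.sqrt_nonneg _
  · rintro _ ⟨_, _, rfl⟩
    exact Real.sqrt_nonneg _

theorem sigmaSMin_sq_mul_norm_sq_le {k : ℕ} {I : Finset (Fin m)} (hk : k ≤ I.card)
    (x : EuclideanSpace ℝ (Fin n)) :
    sigmaSMin A k ^ 2 * ‖x‖ ^ 2 ≤ ∑ i ∈ I, (A *ᵥ ⇑x) i ^ 2 := by
  obtain ⟨J, hJI, rfl⟩ := exists_subset_card_eq hk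
  refine le_trans ?_ (sum_le_sum_of_subset_of_nonneg hJI fun _ _ _ => sq_nonneg _)
  rcases eq_or_ne x 0 with rfl | hx
  · simp
  have hunit : ‖‖x‖⁻¹ • x‖ = 1 := by
    rw [norm_smul, norm_inv, norm_norm, inv_mul_cancel₀ (norm_ne_zero_iff.2 hx)]
  have hsq : ∑ i ∈ J, (A *ᵥ ⇑(‖x‖⁻¹ • x)) i ^ 2 =
      ‖x‖⁻¹ ^ 2 * ∑ i ∈ J, (A *ᵥ ⇑x) i ^ 2 := by
    simp [Matrix.mulVec_smul, mul_pow, mul_sum]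
  have hu : sigmaSMin A J.card ^ 2 ≤ ‖x‖⁻¹ ^ 2 * ∑ i ∈ J, (A *ᵥ ⇑x) i ^ 2 := by
    rw [← hsq, ← Real.sq_sqrt (sum_nonneg fun _ _ => sq_nonneg _)]
    exact pow_le_pow_left₀ (sigmaSMin_nonneg A _) (sigmaSMin_le_sqrt_sum_sq A J hunit) 2
  rwa [inv_pow, ← div_eq_inv_mul, le_div_iff₀ (by positivity)] at hu

theorem sigmaSMin_sq_mul_norm_sq_le_card (hrow : ∀ j, ∑ k, A j k ^ 2 = 1) {k : ℕ} (hk : k ≤ m)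
    (x : EuclideanSpace ℝ (Fin n)) : sigmaSMin A k ^ 2 * ‖x‖ ^ 2 ≤ k * ‖x‖ ^ 2 := by
  obtain ⟨I, -, hI⟩ := exists_subset_card_eq (s := (univ : Finset (Fin m))) (by simpa using hk)
  calc sigmaSMin A k ^ 2 * ‖x‖ ^ 2 ≤ ∑ i ∈ I, (A *ᵥ ⇑x) i ^ 2 :=
        sigmaSMin_sq_mul_norm_sq_le A hI.ge x
    _ ≤ ∑ i ∈ I, ‖x‖ ^ 2 := sum_le_sum fun i _ => by
        rw [← inner_row]
        simpa [sq, norm_row_eq_one A hrow] using real_inner_mul_inner_self_le (row A i) x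
    _ = k * ‖x‖ ^ 2 := by simp [hI]

theorem one_sub_sigmaSMin_sq_div_mul_norm_sq_nonneg (hrow : ∀ j, ∑ k, A j k ^ 2 = 1)
    {k₀ k j : ℕ} (hk₀ : 0 < k₀) (hk₀k : k₀ ≤ k) (hkm : k ≤ m) (hj : 1 ≤ j)
    (x : EuclideanSpace ℝ (Fin n)) :
    0 ≤ (1 - sigmaSMin A (k - j) ^ 2 / k - sigmaSMin A (k₀ - j) ^ 2 / (k₀ * k)) * ‖x‖ ^ 2 := by
  have h₁ := sigmaSMin_sq_mul_norm_sq_le_card A hrow (k := k - j) (by omega) x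
  have h₂ := sigmaSMin_sq_mul_norm_sq_le_card A hrow (k := k₀ - j) (by omega) x
  have hc₁ : ((k - j : ℕ) : ℝ) ≤ k - 1 := by
    rw [le_sub_iff_add_le]
    exact_mod_cast (by omega : k - j + 1 ≤ k)
  have hc₂ : ((k₀ - j : ℕ) : ℝ) ≤ k₀ := by exact_mod_cast Nat.sub_le k₀ j
  have hK₀ : (0 : ℝ) < k₀ := by exact_mod_cast hk₀
  have hK : (0 : ℝ) < k := by exact_mod_cast hk₀.trans_le hk₀k
  rw [show ∀ a b D : ℝ, (1 - a / k - b / (k₀ * k)) * D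
      = (k₀ * k * D - k₀ * (a * D) - b * D) / (k₀ * k) by intros; field_simp]
  refine div_nonneg ?_ (by positivity)
  nlinarith [mul_le_mul_of_nonneg_right hc₁ (sq_nonneg ‖x‖),
    mul_le_mul_of_nonneg_right hc₂ (sq_nonneg ‖x‖)]

theorem sigmaSMin_sq_mul_norm_sq_le_sum_resid_sq (xstar x : EuclideanSpace ℝ (Fin n))
    {ξ : Fin m → ℝ} {k : ℕ} {V : Finset (Fin m)} (hV : ∀ i ∈ V, ξ i = 0) (hk : k ≤ V.card) :
    sigmaSMin A k ^ 2 * ‖x - xstar‖ ^ 2 ≤ ∑ i ∈ V, resid A (A *ᵥ ⇑xstar + ξ) x i ^ 2 := by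
  rw [norm_sub_rev,
    sum_congr rfl fun i hi => by rw [resid_mulVec_add, hV i hi, add_zero, inner_row]]
  exact sigmaSMin_sq_mul_norm_sq_le A hk _

theorem sigmaSMin_sq_mul_norm_sq_le_card_mul_sq (xstar x : EuclideanSpace ℝ (Fin n))
    {ξ : Fin m → ℝ} {kβ : ℕ} (hξ : (univ.filter fun j => ξ j ≠ 0).card ≤ kβ)
    {B₀ : Finset (Fin m)} {Q₀ : ℝ} (hB₀ : ∀ i ∈ B₀, |resid A (A *ᵥ ⇑xstar + ξ) x i| ≤ Q₀) :
    sigmaSMin A (B₀.card - kβ) ^ 2 * ‖x - xstar‖ ^ 2 ≤ B₀.card * Q₀ ^ 2 := by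
  set E := univ.filter fun j => ξ j ≠ 0
  calc _ ≤ ∑ i ∈ B₀ \ E, resid A (A *ᵥ ⇑xstar + ξ) x i ^ 2 :=
        sigmaSMin_sq_mul_norm_sq_le_sum_resid_sq A xstar x
          (fun i hi => by simpa [E] using (mem_sdiff.1 hi).2)
          (by have := le_card_sdiff E B₀; omega)
    _ ≤ ∑ i ∈ B₀, resid A (A *ᵥ ⇑xstar + ξ) x i ^ 2 :=
        sum_le_sum_of_subset_of_nonneg sdiff_subset fun _ _ _ => sq_nonneg _
    _ ≤ B₀.card * Q₀ ^ 2 := sum_sq_le_card_mul_sq hB₀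

end Rows

theorem dqrk_noncorrupt_rows_bound_general
    {m n : ℕ} (A : Matrix (Fin m) (Fin n) ℝ)
    (q₀ q β : ℝ) (kq₀ kq kβ : ℕ)
    (hm : 0 < m)
    (hrow : ∀ j, ∑ k, (A j k) ^ 2 = 1)
    (hβq₀ : β < q₀) (hq₀q : q₀ < q)
    (hkq₀ : (kq₀ : ℝ) = q₀ * m) (hkq : (kq : ℝ) = q * m) (hkβ : (kβ : ℝ) = β * m)
    (xstar : EuclideanSpace ℝ (Fin n)) (bt b ξ : Fin m → ℝ)
    (hsol : A.mulVec (fun k => xstar k) = bt)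
    (hb : b = bt + ξ)
    (hsparse : (Finset.univ.filter fun j => ξ j ≠ 0).card ≤ kβ)
    (xk : EuclideanSpace ℝ (Fin n))
    (hsolve : ∃ j, ∑ k, xk k * A j k = b j)
    (Q₀ Q : ℝ)
    (B : Finset (Fin m)) (hBcard : B.card = kq - kq₀)
    (hBQ : ∀ j ∈ B, Q₀ ≤ |resid A b xk j| ∧ |resid A b xk j| ≤ Q)
    (hBstruct : ∃ Bq B₀ : Finset (Fin m), B₀ ⊆ Bq ∧ Bq.card = kq ∧ B₀.card = kq₀ ∧
      (∀ j ∈ Bq, |resid A b xk j| ≤ Q) ∧ (∀ j ∈ B₀, |resid A b xk j| ≤ Q₀) ∧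
      B = Bq \ B₀)
    (S : Finset (Fin m)) (hS : S = B.filter fun j => ξ j ≠ 0) :
    (1 / (((B \ S).card : ℝ))) *
        ∑ i ∈ B \ S, ‖(xk + resid A b xk i • row A i) - xstar‖ ^ 2 ≤
      (1 - sigmaSMin A (kq - kβ) ^ 2 / (q * m) -
        sigmaSMin A (kq₀ - kβ) ^ 2 / (q₀ * q * m ^ 2)) * ‖xk - xstar‖ ^ 2 := by
  obtain ⟨Bq, B₀, hB₀Bq, hBq, hB₀, -, hB₀Q₀, rfl⟩ := hBstruct
  obtain ⟨j₀, hj₀⟩ := hsolve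
  subst hS hb hsol
  set E := univ.filter fun j => ξ j ≠ 0
  have hclean : ∀ V : Finset (Fin m), Disjoint V E → ∀ i ∈ V, ξ i = 0 := fun V hV i hi => by
    simpa [E] using disjoint_left.1 hV hi
  have hGS : (Bq \ B₀) \ (Bq \ B₀).filter (fun j => ξ j ≠ 0) = (Bq \ B₀) \ E := by
    ext; simp only [mem_sdiff, mem_filter, E, mem_univ, true_and]; tauto
  have hm' : (0 : ℝ) < m := Nat.cast_pos.2 hm
  have hq₀ : 0 < q₀ := (nonneg_of_mul_nonneg_left (hkβ ▸ kβ.cast_nonneg) hm').trans_lt hβq₀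
  have hK₀ : (0 : ℝ) < kq₀ := hkq₀ ▸ mul_pos hq₀ hm'
  have hK₀K : kq₀ < kq := by exact_mod_cast hkq₀ ▸ hkq ▸ mul_lt_mul_of_pos_right hq₀q hm'
  rw [hGS, show q₀ * q * (m : ℝ) ^ 2 = kq₀ * kq by rw [hkq₀, hkq]; ring, ← hkq,
    sum_congr rfl fun i hi =>
      norm_add_resid_smul_row_sub_sq A hrow xstar xk (hclean _ sdiff_disjoint i hi)]
  rcases ((Bq \ B₀) \ E).eq_empty_or_nonempty with hG | hG
  · have hβpos : 1 ≤ kβ := by have := card_le_card (sdiff_eq_empty_iff_subset.1 hG); omega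
    rw [hG, sum_empty, mul_zero]
    exact one_sub_sigmaSMin_sq_div_mul_norm_sq_nonneg A hrow (by exact_mod_cast hK₀) hK₀K.le
      (hBq ▸ (card_le_univ Bq).trans_eq (Fintype.card_fin m)) hβpos _
  have hQ₀ : 0 ≤ Q₀ := by
    obtain ⟨i, hi⟩ := card_pos.1 (hB₀ ▸ Nat.cast_pos.1 hK₀)
    exact (abs_nonneg _).trans (hB₀Q₀ i hi)
  have hkey := card_mul_add_sq_le_mul_sum_sq hsparse
    (fun V hV hk => sigmaSMin_sq_mul_norm_sq_le_sum_resid_sq A xstar xk (hclean V hV) hk)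
    hB₀Bq hBq hB₀Q₀ (fun i hi => (hBQ i hi).1) hQ₀ (sub_eq_zero.2 hj₀.symm) hG
  have hs0 := sigmaSMin_sq_mul_norm_sq_le_card_mul_sq A xstar xk hsparse hB₀Q₀
  rw [hB₀] at hs0
  rw [sum_sub_distrib, sum_const, nsmul_eq_mul, one_div]
  exact inv_mul_sub_le_of_mul_add_sq_le (Nat.cast_pos.2 (card_pos.2 hG))
    (hK₀.trans (by exact_mod_cast hK₀K)) hK₀ hkey hs0

theorem dqrk_noncorrupt_rows_bound
    {m n : ℕ} (A : Matrix (Fin m) (Fin n) ℝ)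
    (q₀ q β : ℝ) (kq₀ kq kβ : ℕ)
    (hm : 0 < m) (hmn : n ≤ m) (hrank : A.rank = n)
    (hrow : ∀ j, ∑ k, (A j k) ^ 2 = 1)
    (hβq₀ : β < q₀) (hq₀q : q₀ < q) (hq1 : q < 1 - β)
    (hkq₀ : (kq₀ : ℝ) = q₀ * m) (hkq : (kq : ℝ) = q * m) (hkβ : (kβ : ℝ) = β * m)
    (xstar : EuclideanSpace ℝ (Fin n)) (bt b ξ : Fin m → ℝ)
    (hsol : A.mulVec (fun k => xstar k) = bt)
    (hb : b = bt + ξ)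
    (hsparse : (Finset.univ.filter fun j => ξ j ≠ 0).card ≤ kβ)
    (xk : EuclideanSpace ℝ (Fin n))
    (hsolve : ∃ j, ∑ k, xk k * A j k = b j)
    (Q₀ Q : ℝ)
    (hQ₀ : IsQuantile (fun j => |resid A b xk j|) kq₀ Q₀)
    (hQ : IsQuantile (fun j => |resid A b xk j|) kq Q)
    (B : Finset (Fin m)) (hBcard : B.card = kq - kq₀)
    (hBQ : ∀ j ∈ B, Q₀ ≤ |resid A b xk j| ∧ |resid A b xk j| ≤ Q)
    (hBstruct : ∃ Bq B₀ : Finset (Fin m), B₀ ⊆ Bq ∧ Bq.card = kq ∧ B₀.card = kq₀ ∧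
      (∀ j ∈ Bq, |resid A b xk j| ≤ Q) ∧ (∀ j ∈ B₀, |resid A b xk j| ≤ Q₀) ∧
      B = Bq \ B₀)
    (S : Finset (Fin m)) (hS : S = B.filter fun j => ξ j ≠ 0) :
    (1 / (((B \ S).card : ℝ))) *
        ∑ i ∈ B \ S, ‖(xk + resid A b xk i • row A i) - xstar‖ ^ 2 ≤
      (1 - sigmaSMin A (kq - kβ) ^ 2 / (q * m) -
        sigmaSMin A (kq₀ - kβ) ^ 2 / (q₀ * q * m ^ 2)) * ‖xk - xstar‖ ^ 2 :=
  dqrk_noncorrupt_rows_bound_general A q₀ q β kq₀ kq kβ hm hrow hβq₀ hq₀q hkq₀ hkq hkβ xstar bt b ξ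
    hsol hb hsparse xk hsolve Q₀ Q B hBcard hBQ hBstruct S hS
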